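/- arXiv:2003.12396 — 11 statements merged into one kernel-verified Lean document; each statement's English description precedes it below -/
import Mathlib

section
/- In the IMR(p) trace model with a static parameter vector φ (the same vector used in every iteration), the repair process converges: for every position t there exists an iteration K such that Y k t = Y K t for all k ≥ K (each position's value sequence is eventually constant; in particular lim_{k→∞} Σ_i (Y (k+1) i − Y k i) = 0). -/
/-- IMR(p) trace model with a static parameter vector `φ`:
observations `x : ℕ → ℝ` (positions indexed from 1), labeled positions `L`,
and a trace `Y : ℕ → ℕ → ℝ` where in each iteration either nothing changes or a
single unlabeled position `t ≥ p+1` is repaired by the ARX(p) formula with the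
static parameter `φ`.  Then the repair converges: each position is eventually
constant along the iterations. -/
theorem imr_static_parameter_converges
    (p : ℕ) (hp : 1 ≤ p) (x : ℕ → ℝ) (L : Set ℕ) (φ : Fin p → ℝ)
    (Y : ℕ → ℕ → ℝ)
    (hstep : ∀ k : ℕ, Y (k + 1) = Y k ∨
      ∃ t : ℕ, t ∉ L ∧ p + 1 ≤ t ∧
        Y (k + 1) t = x t + ∑ i : Fin p, φ i * (Y k (t - (i.1 + 1)) - x (t - (i.1 + 1))) ∧
        ∀ s : ℕ, s ≠ t → Y (k + 1) s = Y k s) :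
    ∀ t : ℕ, ∃ K : ℕ, ∀ k : ℕ, K ≤ k → Y k t = Y K t := by
  classical
  intro t
  induction t using Nat.strong_induction_on with
  | _ t IH =>
  by_cases ht : t < p + 1
  · -- positions ≤ p are never modified
    refine ⟨0, ?_⟩
    intro k _
    induction k with
    | zero => rfl
    | succ n ihn =>
      rcases hstep n with h | ⟨t', _, ht', _, hother⟩
      · rw [h]; exact ihn (Nat.zero_le _)
      · rw [hother t (by omega)]; exact ihn (Nat.zero_le _)
  · push_neg at ht
    have hK' : ∀ i : Fin p, ∃ K, ∀ k, K ≤ k → Y k (t - (i.1 + 1)) = Y K (t - (i.1 + 1)) := by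
      intro i
      exact IH _ (by omega)
    choose Kf hKf using hK'
    obtain ⟨K, hK⟩ : ∃ K, ∀ i : Fin p, Kf i ≤ K :=
      ⟨Finset.univ.sup Kf, fun i => Finset.le_sup (Finset.mem_univ i)⟩
    have hstab : ∀ k, K ≤ k → ∀ i : Fin p, Y k (t - (i.1 + 1)) = Y K (t - (i.1 + 1)) := by
      intro k hk i
      rw [hKf i k (le_trans (hK i) hk), hKf i K (hK i)]
    set v := x t + ∑ i : Fin p, φ i * (Y K (t - (i.1 + 1)) - x (t - (i.1 + 1))) with hv
    have claimA : ∀ k, K ≤ k → Y (k + 1) t = Y k t ∨ Y (k + 1) t = v := by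
      intro k hk
      rcases hstep k with h | ⟨t', _, _, heq, hother⟩
      · left; rw [h]
      · by_cases htt : t = t'
        · right
          subst htt
          rw [heq, hv]
          congr 1
          apply Finset.sum_congr rfl
          intro i _
          rw [hstab k hk i]
        · left; exact hother t htt
    by_cases hconst : ∀ k, K ≤ k → Y k t = Y K t
    · exact ⟨K, hconst⟩
    · push_neg at hconst
      have hex : ∃ k, K ≤ k ∧ Y k t ≠ Y K t := hconst
      set m := Nat.find hex with hmdef
      have hm := Nat.find_spec hex
      rw [← hmdef] at hm
      have hmin : ∀ j, j < m → ¬(K ≤ j ∧ Y j t ≠ Y K t) := fun j hj => Nat.find_min hex hj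
      have hmK : K < m := lt_of_le_of_ne hm.1 (fun h => hm.2 (by rw [← h]))
      obtain ⟨n, hn⟩ : ∃ n, m = n + 1 := ⟨m - 1, by omega⟩
      have hnK : K ≤ n := by omega
      have hYn : Y n t = Y K t := by
        by_contra h
        exact hmin n (by omega) ⟨hnK, h⟩
      have hYm : Y (n + 1) t = v := by
        rcases claimA n hnK with h | h
        · exfalso; apply hm.2; rw [hn, h, hYn]
        · exact h
      have hall : ∀ k, n + 1 ≤ k → Y k t = v := by
        intro k hk
        induction k, hk using Nat.le_induction with
        | base => exact hYm
        | succ k hk ih =>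
          rcases claimA k (by omega) with h | h
          · rw [h, ih]
          · exact h
      exact ⟨n + 1, fun k hk => by rw [hall k hk, hall (n + 1) le_rfl]⟩
end

section
/- In the IMR(p) trace model with iteration-dependent parameter vectors, if the parameter vectors converge, i.e. Φ k → Φ in ℝ^p as k → ∞, then the repair also converges: for every position t the real sequence k ↦ Y k t converges to a limit. -/
open Filter

lemma tendsto_of_step_aux (g u : ℕ → ℝ) (c : ℝ)
    (hu : Filter.Tendsto u Filter.atTop (nhds c))
    (h : ∀ k, g (k + 1) = g k ∨ g (k + 1) = u k) :
    ∃ d : ℝ, Filter.Tendsto g Filter.atTop (nhds d) := by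
  by_cases H : ∃ N, ∀ k, N ≤ k → g (k + 1) = g k
  · obtain ⟨N, hN⟩ := H
    refine ⟨g N, tendsto_atTop_of_eventually_const (i₀ := N) ?_⟩
    intro k hk
    induction k with
    | zero => simp_all
    | succ n ihn =>
      rcases Nat.lt_or_ge N (n + 1) with h1 | h2
      · have hn : N ≤ n := Nat.lt_succ_iff.mp h1
        rw [hN n hn, ihn hn]
      · have : N = n + 1 := le_antisymm hk h2
        rw [this]
  · push_neg at H
    refine ⟨c, ?_⟩
    rw [Metric.tendsto_atTop] at hu ⊢
    intro ε hε
    obtain ⟨M, hM⟩ := hu ε hε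
    obtain ⟨k0, hk0M, hk0⟩ := H M
    refine ⟨k0 + 1, ?_⟩
    intro k hk
    induction k, hk using Nat.le_induction with
    | base =>
      have : g (k0 + 1) = u k0 := (h k0).resolve_left hk0
      rw [this]; exact hM k0 hk0M
    | succ n hn ihn =>
      rcases h n with h1 | h1
      · rw [h1]; exact ihn
      · rw [h1]; exact hM n (le_trans hk0M (le_trans (Nat.le_succ k0) hn))

/-- IMR(p) trace model with iteration-dependent parameter vectors `Φ k ∈ ℝ^p`:
if the parameter vectors converge (`Φ k → φlim` in `ℝ^p`), then for every
position `t` the sequence `k ↦ Y k t` converges. -/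
theorem imr_converged_parameter_converges
    (p : ℕ) (hp : 1 ≤ p) (x : ℕ → ℝ) (L : Set ℕ)
    (Φ : ℕ → Fin p → ℝ) (φlim : Fin p → ℝ)
    (hΦ : Filter.Tendsto Φ Filter.atTop (nhds φlim))
    (Y : ℕ → ℕ → ℝ)
    (hstep : ∀ k : ℕ, Y (k + 1) = Y k ∨
      ∃ t : ℕ, t ∉ L ∧ p + 1 ≤ t ∧
        Y (k + 1) t = x t + ∑ i : Fin p, Φ k i * (Y k (t - (i.1 + 1)) - x (t - (i.1 + 1))) ∧
        ∀ s : ℕ, s ≠ t → Y (k + 1) s = Y k s) :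
    ∀ t : ℕ, ∃ c : ℝ, Filter.Tendsto (fun k => Y k t) Filter.atTop (nhds c) := by
  intro t
  induction t using Nat.strong_induction_on with
  | _ t ih =>
  by_cases ht : t ∉ L ∧ p + 1 ≤ t
  · obtain ⟨htL, htp⟩ := ht
    have hlow : ∀ i : Fin p, ∃ c, Filter.Tendsto (fun k => Y k (t - (i.1 + 1)))
        Filter.atTop (nhds c) := fun i => ih _ (by omega)
    choose c hc using hlow
    have hΦi : ∀ i : Fin p, Filter.Tendsto (fun k => Φ k i) Filter.atTop (nhds (φlim i)) :=
      fun i => (tendsto_pi_nhds.mp hΦ) i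
    have hu : Filter.Tendsto
        (fun k => x t + ∑ i : Fin p, Φ k i * (Y k (t - (i.1 + 1)) - x (t - (i.1 + 1))))
        Filter.atTop (nhds (x t + ∑ i : Fin p, φlim i * (c i - x (t - (i.1 + 1))))) := by
      apply Tendsto.const_add
      apply tendsto_finset_sum
      intro i _
      exact (hΦi i).mul ((hc i).sub tendsto_const_nhds)
    apply tendsto_of_step_aux (fun k => Y k t) _ _ hu
    intro k
    rcases hstep k with h | ⟨t', ht'L, ht'p, heq, hrest⟩
    · left; rw [h]
    · by_cases hts : t = t'
      · right; subst hts; exact heq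
      · left; exact hrest t hts
  · refine ⟨Y 0 t, ?_⟩
    have hconst : ∀ k, Y k t = Y 0 t := by
      intro k
      induction k with
      | zero => rfl
      | succ n ihn =>
        rcases hstep n with h | ⟨t', ht'L, ht'p, _, hrest⟩
        · rw [h, ihn]
        · have hne : t ≠ t' := by rintro rfl; exact ht ⟨ht'L, ht'p⟩
          rw [hrest t hne, ihn]
    exact tendsto_atTop_of_eventually_const (i₀ := 0) (fun k _ => hconst k)
end

section
/- In the IMR(1) trace model with iteration-dependent parameters Φ k ∈ ℝ and initialization Y 0 i = x i for all unlabeled i, every intermediate value has a product provenance: for every iteration k and every position t ≥ 1 there exist s with 0 ≤ s ≤ t−1 and iteration indices k_1 < k_2 < … < k_s < k such that Y k t − x t = Φ(k_s) · Φ(k_{s−1}) ⋯ Φ(k_1) · (Y 0 (t−s) − x (t−s)). -/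
/-- Provenance in the IMR(1) trace model with iteration-dependent parameters
`Φ k ∈ ℝ` and initialization `Y 0 i = x i` on unlabeled positions: every
intermediate value `Y k t` (for `t ≥ 1`) can be written as
`Y k t − x t = Φ(k_s) ⋯ Φ(k_1) · (Y 0 (t−s) − x (t−s))` for some `0 ≤ s ≤ t−1`
and iteration indices `k_1 < … < k_s < k`. -/
theorem imr1_provenance
    (x : ℕ → ℝ) (L : Set ℕ) (Φ : ℕ → ℝ) (Y : ℕ → ℕ → ℝ)
    (hinit : ∀ i ∉ L, Y 0 i = x i)
    (hstep : ∀ k : ℕ, Y (k + 1) = Y k ∨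
      ∃ t : ℕ, t ∉ L ∧ 2 ≤ t ∧
        Y (k + 1) t = x t + Φ k * (Y k (t - 1) - x (t - 1)) ∧
        ∀ s : ℕ, s ≠ t → Y (k + 1) s = Y k s) :
    ∀ k t : ℕ, 1 ≤ t →
      ∃ s : ℕ, s ≤ t - 1 ∧
        ∃ ks : Fin s → ℕ, StrictMono ks ∧ (∀ j : Fin s, ks j < k) ∧
          Y k t - x t = (∏ j : Fin s, Φ (ks j)) * (Y 0 (t - s) - x (t - s)) := by
  intro k
  induction k with
  | zero =>
    intro t ht
    exact ⟨0, Nat.zero_le _, ⟨(fun j => j.elim0), fun i => i.elim0,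
      fun j => j.elim0, by simp⟩⟩
  | succ k ih =>
    intro t ht
    rcases hstep k with heq | ⟨t₀, ht₀L, ht₀2, hupd, hoth⟩
    · obtain ⟨s, hs, ks, hmono, hlt, heqv⟩ := ih t ht
      exact ⟨s, hs, ks, hmono, fun j => (hlt j).trans (Nat.lt_succ_self k),
        by rw [heq]; exact heqv⟩
    · by_cases htt : t = t₀
      · subst htt
        have ht1 : 1 ≤ t - 1 := by omega
        obtain ⟨s, hs, ks, hmono, hlt, heqv⟩ := ih (t - 1) ht1
        refine ⟨s + 1, by omega, fun j => if h : (j : ℕ) < s then ks ⟨j, h⟩ else k,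
          ?_, ?_, ?_⟩
        · intro i j hij
          by_cases hi : (i : ℕ) < s
          · by_cases hj : (j : ℕ) < s
            · simp only [dif_pos hi, dif_pos hj]
              exact hmono (by exact_mod_cast hij)
            · simp only [dif_pos hi, dif_neg hj]
              exact hlt _
          · exfalso
            have : (i : ℕ) < j := hij
            omega
        · intro j
          by_cases hj : (j : ℕ) < s
          · simp only [dif_pos hj]
            exact (hlt _).trans (Nat.lt_succ_self k)
          · simp only [dif_neg hj]
            exact Nat.lt_succ_self k
        · have hprod : (∏ j : Fin (s + 1),
              Φ (if h : (j : ℕ) < s then ks ⟨j, h⟩ else k))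
              = (∏ j : Fin s, Φ (ks j)) * Φ k := by
            rw [Fin.prod_univ_castSucc]
            congr 1
            · apply Finset.prod_congr rfl
              intro j _
              have : ((j.castSucc : Fin (s+1)) : ℕ) < s := j.isLt
              simp [this]
            · simp
          rw [hprod, hupd]
          have : t - (s + 1) = t - 1 - s := by omega
          rw [this]
          rw [heqv]
          ring
      · obtain ⟨s, hs, ks, hmono, hlt, heqv⟩ := ih t ht
        exact ⟨s, hs, ks, hmono, fun j => (hlt j).trans (Nat.lt_succ_self k),
          by rw [hoth t htt]; exact heqv⟩
end

section
/- Let n ≥ 1, m ≥ 1, and let the labeled segments be given by s, e : {1,…,m} → ℕ with the convention e(0) = 0, satisfying e(j−1) < s(j) ≤ e(j) for 1 ≤ j ≤ m and e(m) ≤ n. Let z : ℕ → ℝ with z 0 = 0 and let φ ∈ ℝ. Assume: (i) z (i+1) = φ · z i for every i with 0 ≤ i ≤ n−1 such that position i+1 lies in no labeled segment [s(j), e(j)]; and (ii) the ordinary-least-squares fixed-point equation φ · Σ_{i=1}^{n−1} (z i)² = Σ_{i=1}^{n−1} z i · z (i+1). Then φ satisfies Equation (9): φ · Σ_{j=1}^{m}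 [ (φ^{s(j)−1−e(j−1)} · z(e(j−1)))² + Σ_{i=s(j)}^{e(j)−1} (z i)² ] = Σ_{j=1}^{m} [ φ^{s(j)−1−e(j−1)} · z(e(j−1)) · z(s(j)) + Σ_{i=s(j)}^{e(j)−1} z i · z (i+1) ]. -/
/-- Converged IMR(1) repair with `m` labeled segments `[s j, e j]` (convention
`e 0 = 0`, `z 0 = 0`): if every position lying in no labeled segment satisfies
`z (i+1) = φ · z i` and `φ` satisfies the ordinary-least-squares fixed-point
equation over positions `1,…,n−1`, then `φ` satisfies Equation (9). -/
theorem imr1_converged_parameter_equation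
    (n m : ℕ) (hn : 1 ≤ n) (hm : 1 ≤ m)
    (s e : ℕ → ℕ) (he0 : e 0 = 0)
    (hseg : ∀ j : ℕ, 1 ≤ j → j ≤ m → e (j - 1) < s j ∧ s j ≤ e j)
    (hen : e m ≤ n)
    (z : ℕ → ℝ) (hz0 : z 0 = 0) (φ : ℝ)
    (hrec : ∀ i : ℕ, i ≤ n - 1 →
      (∀ j : ℕ, 1 ≤ j → j ≤ m → ¬(s j ≤ i + 1 ∧ i + 1 ≤ e j)) →
      z (i + 1) = φ * z i)
    (hols : φ * ∑ i ∈ Finset.Icc 1 (n - 1), (z i) ^ 2 =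
      ∑ i ∈ Finset.Icc 1 (n - 1), z i * z (i + 1)) :
    φ * ∑ j ∈ Finset.Icc 1 m,
        ((φ ^ (s j - 1 - e (j - 1)) * z (e (j - 1))) ^ 2 +
          ∑ i ∈ Finset.Icc (s j) (e j - 1), (z i) ^ 2)
      = ∑ j ∈ Finset.Icc 1 m,
        (φ ^ (s j - 1 - e (j - 1)) * z (e (j - 1)) * z (s j) +
          ∑ i ∈ Finset.Icc (s j) (e j - 1), z i * z (i + 1)) := by
  classical
  set g : ℕ → ℝ := fun i => φ * z i ^ 2 - z i * z (i + 1) with hg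
  -- monotonicity of e
  have emono : ∀ k l : ℕ, k ≤ l → l ≤ m → e k ≤ e l := by
    intro k l hkl hlm
    induction l with
    | zero =>
      interval_cases k
      exact le_rfl
    | succ l ih =>
      rcases Nat.lt_or_ge k (l + 1) with h | h
      · have h1 := hseg (l + 1) (by omega) hlm
        have h2 : e k ≤ e l := ih (by omega) (by omega)
        simp only [Nat.add_sub_cancel] at h1
        omega
      · have hk : k = l + 1 := by omega
        rw [hk]
  have slower : ∀ k l : ℕ, k < l → l ≤ m → e k < s l := by
    intro k l hkl hlm
    have h1 := hseg l (by omega) hlm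
    have h2 : e k ≤ e (l - 1) := emono k (l - 1) (by omega) (by omega)
    omega
  -- values in the gap before segment j follow the geometric recursion
  have gap : ∀ j : ℕ, 1 ≤ j → j ≤ m → ∀ d : ℕ, e (j - 1) + d ≤ s j - 1 →
      z (e (j - 1) + d) = φ ^ d * z (e (j - 1)) := by
    intro j hj1 hjm d
    induction d with
    | zero => simp
    | succ d ih =>
      intro hd
      have hzd := ih (by omega)
      have hsj := hseg j hj1 hjm
      have hem : e j ≤ e m := emono j m hjm le_rfl
      have hi : e (j - 1) + d ≤ n - 1 := by omega
      have hns : z (e (j - 1) + d + 1) = φ * z (e (j - 1) + d) := by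
        apply hrec _ hi
        intro k hk1 hkm
        rcases Nat.lt_or_ge k j with hkj | hkj
        · have hek : e k ≤ e (j - 1) := emono k (j - 1) (by omega) (by omega)
          omega
        · have hsk : s j ≤ s k := by
            rcases Nat.eq_or_lt_of_le hkj with h | h
            · exact h ▸ le_rfl
            · have h1 := hseg k hk1 hkm
              have h2 : e j ≤ e (k - 1) := emono j (k - 1) (by omega) (by omega)
              omega
          omega
      have hd1 : e (j - 1) + (d + 1) = e (j - 1) + d + 1 := by omega
      rw [hd1, hns, hzd, pow_succ]
      ring
  have zsj : ∀ j : ℕ, 1 ≤ j → j ≤ m →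
      z (s j - 1) = φ ^ (s j - 1 - e (j - 1)) * z (e (j - 1)) := by
    intro j h1 h2
    have hsj := hseg j h1 h2
    have h := gap j h1 h2 (s j - 1 - e (j - 1)) (by omega)
    rwa [show e (j - 1) + (s j - 1 - e (j - 1)) = s j - 1 from by omega] at h
  -- per-segment bracket identity
  have hbr : ∀ j ∈ Finset.Icc 1 m,
      φ * ((φ ^ (s j - 1 - e (j - 1)) * z (e (j - 1))) ^ 2 +
          ∑ i ∈ Finset.Icc (s j) (e j - 1), (z i) ^ 2)
        - (φ ^ (s j - 1 - e (j - 1)) * z (e (j - 1)) * z (s j) +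
          ∑ i ∈ Finset.Icc (s j) (e j - 1), z i * z (i + 1))
      = ∑ i ∈ Finset.Icc (s j - 1) (e j - 1), g i := by
    intro j hj
    rw [Finset.mem_Icc] at hj
    have hsj := hseg j hj.1 hj.2
    have hT : Finset.Icc (s j - 1) (e j - 1)
        = insert (s j - 1) (Finset.Icc (s j) (e j - 1)) := by
      ext x
      simp only [Finset.mem_Icc, Finset.mem_insert]
      omega
    have hmem : s j - 1 ∉ Finset.Icc (s j) (e j - 1) := by
      simp only [Finset.mem_Icc]
      omega
    rw [hT, Finset.sum_insert hmem]
    have e1 : ∑ i ∈ Finset.Icc (s j) (e j - 1), g i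
        = φ * ∑ i ∈ Finset.Icc (s j) (e j - 1), (z i) ^ 2
          - ∑ i ∈ Finset.Icc (s j) (e j - 1), z i * z (i + 1) := by
      rw [Finset.mul_sum, ← Finset.sum_sub_distrib]
    rw [e1]
    have e2 : g (s j - 1) = φ * (φ ^ (s j - 1 - e (j - 1)) * z (e (j - 1))) ^ 2
        - φ ^ (s j - 1 - e (j - 1)) * z (e (j - 1)) * z (s j) := by
      have h1 : s j - 1 + 1 = s j := by omega
      simp only [hg]
      rw [h1, zsj j hj.1 hj.2]
    rw [e2]
    ring
  -- the OLS equation says the total sum of g vanishes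
  have hsum0 : ∑ i ∈ Finset.Icc 1 (n - 1), g i = 0 := by
    have h : ∑ i ∈ Finset.Icc 1 (n - 1), g i
        = φ * ∑ i ∈ Finset.Icc 1 (n - 1), (z i) ^ 2
          - ∑ i ∈ Finset.Icc 1 (n - 1), z i * z (i + 1) := by
      rw [Finset.mul_sum, ← Finset.sum_sub_distrib]
    rw [h, hols, sub_self]
  -- the intervals [s j - 1, e j - 1] are pairwise disjoint
  have hdisj : Set.PairwiseDisjoint (↑(Finset.Icc 1 m))
      (fun j => Finset.Icc (s j - 1) (e j - 1)) := by
    have key : ∀ a b : ℕ, 1 ≤ a → a < b → b ≤ m →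
        Disjoint (Finset.Icc (s a - 1) (e a - 1)) (Finset.Icc (s b - 1) (e b - 1)) := by
      intro a b ha1 hlt hbm
      apply Finset.disjoint_left.mpr
      intro x hxa hxb
      simp only [Finset.mem_Icc] at hxa hxb
      have h1 : e a < s b := slower a b hlt hbm
      have h2 : 1 ≤ e a := by
        have h3 := hseg a ha1 (by omega)
        have h4 := slower 0 a (by omega) (by omega)
        omega
      omega
    intro a ha b hb hab
    simp only [Finset.coe_Icc, Set.mem_Icc] at ha hb
    rcases Nat.lt_or_ge a b with h | h
    · exact key a b ha.1 h hb.2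
    · exact (key b a hb.1 (by omega) ha.2).symm
  set U : Finset ℕ := (Finset.Icc 1 m).biUnion (fun j => Finset.Icc (s j - 1) (e j - 1))
    with hUdef
  have hU : ∑ j ∈ Finset.Icc 1 m, ∑ i ∈ Finset.Icc (s j - 1) (e j - 1), g i
      = ∑ i ∈ U, g i := (Finset.sum_biUnion hdisj).symm
  have hg0 : ∀ x ∈ U ∪ Finset.Icc 1 (n - 1), x ∉ U → g x = 0 := by
    intro x hx hxU
    have hxS : x ∈ Finset.Icc 1 (n - 1) := by
      rcases Finset.mem_union.mp hx with h | h
      · exact absurd h hxU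
      · exact h
    rw [Finset.mem_Icc] at hxS
    have hrx : z (x + 1) = φ * z x := by
      apply hrec x hxS.2
      intro k hk1 hkm hc
      apply hxU
      rw [hUdef]
      exact Finset.mem_biUnion.mpr
        ⟨k, Finset.mem_Icc.mpr ⟨hk1, hkm⟩, Finset.mem_Icc.mpr (by omega)⟩
    simp only [hg]
    rw [hrx]
    ring
  have hg0' : ∀ x ∈ U ∪ Finset.Icc 1 (n - 1), x ∉ Finset.Icc 1 (n - 1) → g x = 0 := by
    intro x hx hxS
    have hxU : x ∈ U := by
      rcases Finset.mem_union.mp hx with h | h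
      · exact h
      · exact absurd h hxS
    rw [hUdef, Finset.mem_biUnion] at hxU
    obtain ⟨k, hk, hxk⟩ := hxU
    rw [Finset.mem_Icc] at hk hxk
    rw [Finset.mem_Icc] at hxS
    have hek : e k ≤ e m := emono k m hk.2 le_rfl
    have hx0 : x = 0 := by omega
    simp only [hg, hx0, hz0]
    ring
  have hmain : ∑ j ∈ Finset.Icc 1 m, ∑ i ∈ Finset.Icc (s j - 1) (e j - 1), g i = 0 := by
    rw [hU]
    have h1 : ∑ i ∈ U, g i = ∑ i ∈ U ∪ Finset.Icc 1 (n - 1), g i :=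
      Finset.sum_subset Finset.subset_union_left hg0
    have h2 : ∑ i ∈ Finset.Icc 1 (n - 1), g i = ∑ i ∈ U ∪ Finset.Icc 1 (n - 1), g i :=
      Finset.sum_subset Finset.subset_union_right hg0'
    rw [h1, ← h2, hsum0]
  rw [Finset.mul_sum, ← sub_eq_zero, ← Finset.sum_sub_distrib]
  rw [Finset.sum_congr rfl hbr]
  exact hmain
end

section
/- In the single-labeled-segment IMR(1) recursion, if the labeled data satisfies |Σ_{t=1}^{ℓ−1} z t · z (t+1)| < Σ_{t=1}^{ℓ−1} (z t)², then the parameter estimates are uniformly bounded: |φ k| < 1 for every k ≥ 0. -/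
/-- Single-labeled-segment IMR(1) recursion: with
`φ k = (Σ_{t=1}^{ℓ+k−1} z t · z (t+1)) / (Σ_{t=1}^{ℓ+k} (z t)²)` and
`z (ℓ+k+1) = φ k · z (ℓ+k)`, if the labeled data satisfies
`|Σ_{t=1}^{ℓ−1} z t · z (t+1)| < Σ_{t=1}^{ℓ−1} (z t)²`, then `|φ k| < 1` for all `k`. -/
theorem imr1_parameter_bounded
    (ℓ : ℕ) (hℓ : 2 ≤ ℓ) (z : ℕ → ℝ) (φ : ℕ → ℝ)
    (hφ : ∀ k : ℕ, φ k = (∑ t ∈ Finset.Icc 1 (ℓ + k - 1), z t * z (t + 1)) /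
      (∑ t ∈ Finset.Icc 1 (ℓ + k), (z t) ^ 2))
    (hz : ∀ k : ℕ, z (ℓ + k + 1) = φ k * z (ℓ + k))
    (hND : |∑ t ∈ Finset.Icc 1 (ℓ - 1), z t * z (t + 1)| <
      ∑ t ∈ Finset.Icc 1 (ℓ - 1), (z t) ^ 2) :
    ∀ k : ℕ, |φ k| < 1 := by
  set N : ℕ → ℝ := fun k => ∑ t ∈ Finset.Icc 1 (ℓ + k - 1), z t * z (t + 1) with hN
  set D : ℕ → ℝ := fun k => ∑ t ∈ Finset.Icc 1 (ℓ + k), (z t) ^ 2 with hD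
  have hNrec : ∀ k, N (k + 1) = N k + z (ℓ + k) * z (ℓ + k + 1) := by
    intro k
    have h1 : ℓ + (k + 1) - 1 = (ℓ + k - 1) + 1 := by omega
    have h2 : (ℓ + k - 1) + 1 = ℓ + k := by omega
    simp only [hN]
    rw [h1, Finset.sum_Icc_succ_top (by omega : 1 ≤ (ℓ + k - 1) + 1), h2]
  have hDrec : ∀ k, D (k + 1) = D k + (z (ℓ + k + 1)) ^ 2 := by
    intro k
    have h1 : ℓ + (k + 1) = (ℓ + k) + 1 := by omega
    simp only [hD]
    rw [h1, Finset.sum_Icc_succ_top (by omega : 1 ≤ (ℓ + k) + 1)]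
  have hD0 : D 0 = (∑ t ∈ Finset.Icc 1 (ℓ - 1), (z t) ^ 2) + (z ℓ) ^ 2 := by
    have h1 : ℓ + 0 = (ℓ - 1) + 1 := by omega
    have h2 : (ℓ - 1) + 1 = ℓ := by omega
    simp only [hD]
    rw [h1, Finset.sum_Icc_succ_top (by omega : 1 ≤ (ℓ - 1) + 1), h2]
  have hN0 : N 0 = ∑ t ∈ Finset.Icc 1 (ℓ - 1), z t * z (t + 1) := by
    simp [hN]
  -- key invariant
  have key : ∀ k, |N k| < D k - (z (ℓ + k)) ^ 2 := by
    intro k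
    induction k with
    | zero =>
      rw [hN0, hD0]
      simpa using hND
    | succ k ih =>
      have hDk : (0 : ℝ) < D k := by
        have h1 : (0:ℝ) ≤ |N k| := abs_nonneg _
        have h2 : (0:ℝ) ≤ (z (ℓ + k)) ^ 2 := sq_nonneg _
        linarith
      have hφk : φ k = N k / D k := hφ k
      have hNk1 : N (k + 1) = N k * (D k + (z (ℓ + k)) ^ 2) / D k := by
        rw [hNrec k, hz k, hφk]
        field_simp
      have hDk1 : D (k + 1) - (z (ℓ + (k + 1))) ^ 2 = D k := by
        have : ℓ + (k + 1) = ℓ + k + 1 := by omega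
        rw [this, hDrec k]; ring
      rw [hDk1, hNk1]
      rw [abs_div, abs_of_pos hDk, abs_mul,
        abs_of_pos (by positivity : (0:ℝ) < D k + (z (ℓ + k)) ^ 2)]
      rw [div_lt_iff₀ hDk]
      nlinarith [abs_nonneg (N k), sq_nonneg (z (ℓ + k)), sq_nonneg ((z (ℓ + k))^2)]
  intro k
  have hDk : (0 : ℝ) < D k := by
    have := key k
    have h1 : (0:ℝ) ≤ |N k| := abs_nonneg _
    have h2 : (0:ℝ) ≤ (z (ℓ + k)) ^ 2 := sq_nonneg _
    linarith
  rw [hφ k]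
  rw [show (∑ t ∈ Finset.Icc 1 (ℓ + k - 1), z t * z (t + 1)) /
      (∑ t ∈ Finset.Icc 1 (ℓ + k), (z t) ^ 2) = N k / D k from rfl]
  rw [abs_div, abs_of_pos hDk, div_lt_one hDk]
  have := key k
  have h2 : (0:ℝ) ≤ (z (ℓ + k)) ^ 2 := sq_nonneg _
  linarith
end

section
/- In the single-labeled-segment IMR(1) recursion, the successive parameter estimates satisfy, for every k ≥ 0 with Σ_{t=1}^{ℓ+k} (z t)² ≠ 0, the increment identity φ (k+1) − φ k = φ k · (1 − (φ k)²) · (z (ℓ+k))² / (Σ_{t=1}^{ℓ+k+1} (z t)²). -/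
/-! Writing `S` for the current sum of squares and `a = z (ℓ+k)`, the next point is `φ k * a`, so
one step adds `a * (φ k * a)` to the numerator `φ k * S` and `(φ k * a) ^ 2` to the denominator `S`;
the increment of the ratio is then a one-line computation. -/

open Finset

theorem Finset.sum_Icc_one_eq_sum_Icc_one_pred_add {M : Type*} [AddCommMonoid M] (f : ℕ → M)
    {n : ℕ} (hn : 1 ≤ n) : ∑ t ∈ Icc 1 n, f t = ∑ t ∈ Icc 1 (n - 1), f t + f n := by
  obtain ⟨m, rfl⟩ := Nat.exists_eq_add_of_le' hn
  rw [sum_Icc_succ_top (by omega), Nat.add_sub_cancel]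

theorem div_sub_eq_of_ratio_step {φ S a : ℝ} (h : S + (φ * a) ^ 2 ≠ 0) :
    (φ * S + a * (φ * a)) / (S + (φ * a) ^ 2) - φ =
      φ * (1 - φ ^ 2) * a ^ 2 / (S + (φ * a) ^ 2) := by
  rw [div_sub' h]
  ring

theorem imr1_parameter_increment_general
    (ℓ : ℕ) (z : ℕ → ℝ) (φ : ℕ → ℝ)
    (hφ : ∀ k : ℕ, φ k = (∑ t ∈ Finset.Icc 1 (ℓ + k - 1), z t * z (t + 1)) /
      (∑ t ∈ Finset.Icc 1 (ℓ + k), (z t) ^ 2))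
    (hz : ∀ k : ℕ, z (ℓ + k + 1) = φ k * z (ℓ + k)) :
    ∀ k : ℕ, (∑ t ∈ Finset.Icc 1 (ℓ + k), (z t) ^ 2) ≠ 0 →
      φ (k + 1) - φ k =
        φ k * (1 - (φ k) ^ 2) * (z (ℓ + k)) ^ 2 /
          (∑ t ∈ Finset.Icc 1 (ℓ + k + 1), (z t) ^ 2) := by
  intro k hk
  set S := ∑ t ∈ Icc 1 (ℓ + k), z t ^ 2
  have hn : 1 ≤ ℓ + k := Nat.one_le_iff_ne_zero.mpr fun h => hk (by simp [S, h])
  have hN : ∑ t ∈ Icc 1 (ℓ + k - 1), z t * z (t + 1) = φ k * S := by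
    rw [hφ k, div_mul_cancel₀ _ hk]
  have hN' : ∑ t ∈ Icc 1 (ℓ + (k + 1) - 1), z t * z (t + 1)
      = φ k * S + z (ℓ + k) * (φ k * z (ℓ + k)) := by
    rw [show ℓ + (k + 1) - 1 = ℓ + k by omega, sum_Icc_one_eq_sum_Icc_one_pred_add _ hn, hN, hz k]
  have hS' : ∑ t ∈ Icc 1 (ℓ + k + 1), z t ^ 2 = S + (φ k * z (ℓ + k)) ^ 2 := by
    rw [sum_Icc_succ_top (by omega), hz k]
  have hS_pos : 0 < S := (sum_nonneg fun t _ => sq_nonneg (z t)).lt_of_ne' hk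
  rw [hφ (k + 1), hN', ← add_assoc, hS']
  exact div_sub_eq_of_ratio_step (by positivity)

/-- Single-labeled-segment IMR(1) recursion: increment identity for the
successive parameter estimates. For every `k` with nonzero denominator,
`φ (k+1) − φ k = φ k · (1 − (φ k)²) · (z (ℓ+k))² / (Σ_{t=1}^{ℓ+k+1} (z t)²)`. -/
theorem imr1_parameter_increment
    (ℓ : ℕ) (hℓ : 2 ≤ ℓ) (z : ℕ → ℝ) (φ : ℕ → ℝ)
    (hφ : ∀ k : ℕ, φ k = (∑ t ∈ Finset.Icc 1 (ℓ + k - 1), z t * z (t + 1)) /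
      (∑ t ∈ Finset.Icc 1 (ℓ + k), (z t) ^ 2))
    (hz : ∀ k : ℕ, z (ℓ + k + 1) = φ k * z (ℓ + k)) :
    ∀ k : ℕ, (∑ t ∈ Finset.Icc 1 (ℓ + k), (z t) ^ 2) ≠ 0 →
      φ (k + 1) - φ k =
        φ k * (1 - (φ k) ^ 2) * (z (ℓ + k)) ^ 2 /
          (∑ t ∈ Finset.Icc 1 (ℓ + k + 1), (z t) ^ 2) :=
  imr1_parameter_increment_general ℓ z φ hφ hz
end

section
/- In the single-labeled-segment IMR(1) recursion, assume |N| < D and φ 0 > 0. Then for every k ≥ 0 one has 0 < φ k ≤ φ (k+1) < 1 (the parameter sequence is nondecreasing, positive, and bounded above by 1); moreover if z (ℓ+k) ≠ 0 then the increase is strict, φ k < φ (k+1). -/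
set_option maxHeartbeats 1000000 in
/-- Single-labeled-segment IMR(1) recursion: if `|N| < D` and `φ 0 > 0`, then for
every `k` one has `0 < φ k ≤ φ (k+1) < 1`; moreover the increase is strict
whenever `z (ℓ+k) ≠ 0`. -/
theorem imr1_parameter_monotone
    (ℓ : ℕ) (hℓ : 2 ≤ ℓ) (z : ℕ → ℝ) (φ : ℕ → ℝ)
    (hφ : ∀ k : ℕ, φ k = (∑ t ∈ Finset.Icc 1 (ℓ + k - 1), z t * z (t + 1)) /
      (∑ t ∈ Finset.Icc 1 (ℓ + k), (z t) ^ 2))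
    (hz : ∀ k : ℕ, z (ℓ + k + 1) = φ k * z (ℓ + k))
    (hND : |∑ t ∈ Finset.Icc 1 (ℓ - 1), z t * z (t + 1)| <
      ∑ t ∈ Finset.Icc 1 (ℓ - 1), (z t) ^ 2)
    (hφ0 : 0 < φ 0) :
    ∀ k : ℕ, (0 < φ k ∧ φ k ≤ φ (k + 1) ∧ φ (k + 1) < 1) ∧
      (z (ℓ + k) ≠ 0 → φ k < φ (k + 1)) := by
  obtain ⟨m, rfl⟩ : ∃ m, ℓ = m + 2 := ⟨ℓ - 2, by omega⟩
  set N : ℝ := ∑ t ∈ Finset.Icc 1 (m + 1), z t * z (t + 1) with hNdef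
  set D : ℝ := ∑ t ∈ Finset.Icc 1 (m + 1), (z t) ^ 2 with hDdef
  have hm1 : m + 2 - 1 = m + 1 := by omega
  rw [hm1] at hND
  have hNDa := abs_lt.mp hND
  set S : ℕ → ℝ := fun k => ∑ t ∈ Finset.Icc 1 (m + 2 + k), (z t) ^ 2 with hSdef
  set T : ℕ → ℝ := fun k => ∑ t ∈ Finset.Icc 1 (m + 1 + k), z t * z (t + 1) with hTdef
  have hφ' : ∀ k, φ k = T k / S k := by
    intro k
    have h1 : m + 2 + k - 1 = m + 1 + k := by omega
    rw [hφ, h1]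
  have hS : ∀ k, S (k + 1) = S k + z (m + 2 + k + 1) ^ 2 := by
    intro k
    have h1 : m + 2 + (k + 1) = (m + 2 + k) + 1 := by omega
    simp only [hSdef, h1]
    rw [Finset.sum_Icc_succ_top (by omega)]
  have hT : ∀ k, T (k + 1) = T k + z (m + 2 + k) * z (m + 2 + k + 1) := by
    intro k
    have h1 : m + 1 + (k + 1) = (m + 1 + k) + 1 := by omega
    have h2 : m + 1 + k + 1 = m + 2 + k := by omega
    simp only [hTdef, h1]
    rw [Finset.sum_Icc_succ_top (by omega), h2]
  have hS0 : S 0 = D + z (m + 2) ^ 2 := by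
    simp only [hSdef, hDdef]
    rw [show m + 2 + 0 = (m + 1) + 1 from by omega, Finset.sum_Icc_succ_top (by omega)]
  have hT0 : T 0 = N := by simp [hTdef, hNdef]
  -- gap invariant
  have gap : ∀ k, z (m + 2 + k) ^ 2 / 2 < S k - T k := by
    intro k
    induction k with
    | zero =>
      rw [hS0, hT0]
      nlinarith [sq_nonneg (z (m + 2)), hNDa.2]
    | succ k ih =>
      rw [hS, hT]
      have h1 : m + 2 + (k + 1) = m + 2 + k + 1 := by omega
      rw [h1]
      nlinarith [sq_nonneg (z (m + 2 + k) - z (m + 2 + k + 1))]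
  have hSpos : ∀ k, 0 < S k := by
    intro k
    induction k with
    | zero =>
      rw [hS0]
      nlinarith [sq_nonneg (z (m + 2)), abs_nonneg N, hND, abs_nonneg N]
    | succ k ih =>
      rw [hS]
      nlinarith [sq_nonneg (z (m + 2 + k + 1))]
  clear_value S T N D
  -- key invariant: 0 < φ k < 1
  have inv : ∀ k, 0 < φ k ∧ φ k < 1 := by
    intro k
    induction k with
    | zero =>
      refine ⟨hφ0, ?_⟩
      rw [hφ']
      rw [div_lt_one (hSpos 0)]
      nlinarith [gap 0, sq_nonneg (z (m + 2 + 0))]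
    | succ k ih =>
      obtain ⟨h1, h2⟩ := ih
      have hTk : T k = φ k * S k := by
        rw [hφ' k, div_mul_cancel₀ _ (hSpos k).ne']
      constructor
      · rw [hφ', hT, hS, hz k]
        apply div_pos
        · nlinarith [hSpos k, sq_nonneg (z (m + 2 + k))]
        · have := hSpos (k + 1)
          rw [hS, hz k] at this
          exact this
      · rw [hφ', div_lt_one (hSpos (k + 1))]
        nlinarith [gap (k + 1), sq_nonneg (z (m + 2 + (k + 1)))]
  intro k
  obtain ⟨h1, h2⟩ := inv k
  obtain ⟨h1', h2'⟩ := inv (k + 1)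
  have hTk : T k = φ k * S k := by rw [hφ' k, div_mul_cancel₀ _ (hSpos k).ne']
  have hTk1 : T (k + 1) = φ (k + 1) * S (k + 1) := by
    rw [hφ' (k + 1), div_mul_cancel₀ _ (hSpos (k + 1)).ne']
  have e2 : φ (k + 1) * (S k + (φ k * z (m + 2 + k)) ^ 2)
      = φ k * S k + z (m + 2 + k) * (φ k * z (m + 2 + k)) := by
    rw [← hz k, ← hS, ← hTk, ← hT, hTk1]
  have hdenpos : 0 < S k + (φ k * z (m + 2 + k)) ^ 2 := by
    nlinarith [hSpos k, sq_nonneg (φ k * z (m + 2 + k))]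
  have key : (φ (k + 1) - φ k) * (S k + (φ k * z (m + 2 + k)) ^ 2)
      = φ k * z (m + 2 + k) ^ 2 * (1 - φ k ^ 2) := by linear_combination e2
  have h12 : 0 < 1 - φ k ^ 2 := by nlinarith
  have hmono : φ k ≤ φ (k + 1) := by
    have hrhs : 0 ≤ φ k * z (m + 2 + k) ^ 2 * (1 - φ k ^ 2) := by positivity
    by_contra hcon
    push_neg at hcon
    nlinarith [mul_pos (by linarith : (0:ℝ) < φ k - φ (k + 1)) hdenpos]
  refine ⟨⟨h1, hmono, h2'⟩, fun hzne => ?_⟩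
  have ha : 0 < z (m + 2 + k) ^ 2 := by positivity
  have hrhs : 0 < φ k * z (m + 2 + k) ^ 2 * (1 - φ k ^ 2) := by positivity
  by_contra hcon
  push_neg at hcon
  nlinarith [mul_nonneg (by linarith : (0:ℝ) ≤ φ k - φ (k + 1)) hdenpos.le]
end

section
/- Let n ≥ 2 and let w 1, …, w (n−1) be real numbers with D := Σ_{t=1}^{n−1} (w t)² ≠ 0, and set C := Σ_{t=1}^{n−2} w t · w (t+1). Then for every initial value φ 0 ∈ ℝ, the sequence defined by φ (k+1) = (C + (w (n−1))² · φ k) / D converges to a limit. -/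
/-!
Write `D = P + a` with `a = (w (n−1))²` and `P = Σ_{t=1}^{n−2} (w t)² ≥ 0`, so the iteration is
`φ (k+1) = (a / D) · φ k + C / D`. If `P > 0` the slope `a / D` lies in `[0, 1)` and the affine
iteration converges geometrically to its fixed point. If `P = 0` then `w 1 = ⋯ = w (n−2) = 0`, so
`C = 0` and `a = D ≠ 0`: the iteration is the identity and `φ` is constant.
-/

open Filter Topology Finset

theorem tendsto_of_affine_recurrence {x : ℕ → ℝ} {r b : ℝ} (hr : |r| < 1)
    (hx : ∀ k, x (k + 1) = r * x k + b) : Tendsto x atTop (𝓝 (b / (1 - r))) := by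
  have hfix : r * (b / (1 - r)) + b = b / (1 - r) := by
    have : 1 - r ≠ 0 := by linarith [le_abs_self r]
    field_simp
    ring
  set L := b / (1 - r)
  have hgeom : ∀ k, x k = L + r ^ k * (x 0 - L) := by
    intro k
    induction k with
    | zero => ring
    | succ k ih => rw [hx, ih, pow_succ]; linear_combination hfix
  have hlim := ((tendsto_pow_atTop_nhds_zero_of_abs_lt_one hr).mul_const (x 0 - L)).const_add L
  rw [zero_mul, add_zero] at hlim
  exact hlim.congr fun k => (hgeom k).symm

theorem Finset.sum_mul_eq_zero_of_sum_sq_eq_zero {ι R : Type*} [Ring R] [LinearOrder R]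
    [IsStrictOrderedRing R] {s : Finset ι} {f g : ι → R}
    (h : ∑ i ∈ s, f i ^ 2 = 0) : ∑ i ∈ s, f i * g i = 0 := by
  refine sum_eq_zero fun i hi => ?_
  have hfi := (sum_eq_zero_iff_of_nonneg fun j _ => sq_nonneg (f j)).mp h i hi
  rw [pow_eq_zero_iff two_ne_zero |>.mp hfi, zero_mul]

/-- Final phase of IMR(1): with `D = Σ_{t=1}^{n−1} (w t)² ≠ 0` and
`C = Σ_{t=1}^{n−2} w t · w (t+1)`, for every initial value the affine iteration
`φ (k+1) = (C + (w (n−1))² · φ k) / D` converges. -/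
theorem imr1_final_phase_converges
    (n : ℕ) (hn : 2 ≤ n) (w : ℕ → ℝ)
    (hD : (∑ t ∈ Finset.Icc 1 (n - 1), (w t) ^ 2) ≠ 0) :
    ∀ φ : ℕ → ℝ,
      (∀ k : ℕ, φ (k + 1) =
        ((∑ t ∈ Finset.Icc 1 (n - 2), w t * w (t + 1)) + (w (n - 1)) ^ 2 * φ k) /
          (∑ t ∈ Finset.Icc 1 (n - 1), (w t) ^ 2)) →
      ∃ c : ℝ, Filter.Tendsto φ Filter.atTop (nhds c) := by
  intro φ hφ
  set D := ∑ t ∈ Icc 1 (n - 1), w t ^ 2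
  set C := ∑ t ∈ Icc 1 (n - 2), w t * w (t + 1)
  set P := ∑ t ∈ Icc 1 (n - 2), w t ^ 2
  have hsplit : D = P + w (n - 1) ^ 2 := by
    obtain ⟨m, rfl⟩ : ∃ m, n = m + 2 := ⟨n - 2, by omega⟩
    exact sum_Icc_succ_top (by omega) _
  have hP : 0 ≤ P := sum_nonneg fun t _ => sq_nonneg (w t)
  rcases hP.eq_or_lt with hP0 | hPpos
  · have hC : C = 0 := sum_mul_eq_zero_of_sum_sq_eq_zero hP0.symm
    have hstep : ∀ k, φ (k + 1) = φ k := fun k => by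
      rw [hφ k, hC, zero_add, hsplit, ← hP0, zero_add, mul_div_cancel_left₀]
      rwa [hsplit, ← hP0, zero_add] at hD
    have hconst : ∀ k, φ k = φ 0 := Nat.rec rfl fun k ih => (hstep k).trans ih
    exact ⟨φ 0, tendsto_const_nhds.congr fun k => (hconst k).symm⟩
  · have hDpos : 0 < D := by rw [hsplit]; positivity
    have hr : |w (n - 1) ^ 2 / D| < 1 := by
      rw [abs_of_nonneg (by positivity), div_lt_one hDpos]
      linarith
    refine ⟨_, tendsto_of_affine_recurrence (b := C / D) hr fun k => ?_⟩
    rw [hφ k]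
    ring
end

section
/- Let z : ℕ → ℝ, φ ∈ ℝ, and integers 2 ≤ ℓ ≤ n. Assume: (i) z (i+1) = φ · z i for every i with ℓ ≤ i ≤ n−1; (ii) the ordinary-least-squares fixed-point equation φ · Σ_{i=1}^{n−1} (z i)² = Σ_{i=1}^{n−1} z i · z (i+1); and (iii) Σ_{i=1}^{ℓ−1} (z i)² ≠ 0. Then the converged parameter is determined by the labeled prefix alone: φ = (Σ_{i=1}^{ℓ−1} z i · z (i+1)) / (Σ_{i=1}^{ℓ−1} (z i)²), and the converged repair satisfies z i = φ^{i−ℓ} · z ℓ for every ℓ ≤ i ≤ n. -/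
/-- Converged IMR(1) repair with one labeled segment (first `ℓ` positions
labeled): if `z (i+1) = φ · z i` for all unlabeled positions `ℓ ≤ i ≤ n−1`,
`φ` satisfies the ordinary-least-squares fixed-point equation over `1,…,n−1`,
and the labeled prefix is nondegenerate, then `φ` is determined by the labeled
prefix alone and `z i = φ^{i−ℓ} · z ℓ` for all `ℓ ≤ i ≤ n`. -/
theorem imr1_one_segment_direct
    (z : ℕ → ℝ) (φ : ℝ) (ℓ n : ℕ) (hℓ : 2 ≤ ℓ) (hn : ℓ ≤ n)
    (hrec : ∀ i : ℕ, ℓ ≤ i → i ≤ n - 1 → z (i + 1) = φ * z i)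
    (hols : φ * ∑ i ∈ Finset.Icc 1 (n - 1), (z i) ^ 2 =
      ∑ i ∈ Finset.Icc 1 (n - 1), z i * z (i + 1))
    (hpre : (∑ i ∈ Finset.Icc 1 (ℓ - 1), (z i) ^ 2) ≠ 0) :
    φ = (∑ i ∈ Finset.Icc 1 (ℓ - 1), z i * z (i + 1)) /
        (∑ i ∈ Finset.Icc 1 (ℓ - 1), (z i) ^ 2) ∧
    ∀ i : ℕ, ℓ ≤ i → i ≤ n → z i = φ ^ (i - ℓ) * z ℓ := by
  have hIcc : ∀ m : ℕ, Finset.Icc 1 m = Finset.Ioc 0 m := by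
    intro m; ext x; simp [Nat.lt_iff_add_one_le]
  have hsplit : ∀ f : ℕ → ℝ,
      (∑ i ∈ Finset.Icc 1 (n - 1), f i) =
      (∑ i ∈ Finset.Icc 1 (ℓ - 1), f i) + ∑ i ∈ Finset.Ioc (ℓ - 1) (n - 1), f i := by
    intro f
    rw [hIcc, hIcc]
    exact (Finset.sum_Ioc_consecutive f (Nat.zero_le _)
      (Nat.sub_le_sub_right hn 1)).symm
  have htail : ∀ i ∈ Finset.Ioc (ℓ - 1) (n - 1), z i * z (i + 1) = φ * (z i) ^ 2 := by
    intro i hi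
    simp only [Finset.mem_Ioc] at hi
    have hiℓ : ℓ ≤ i := by omega
    rw [hrec i hiℓ hi.2]; ring
  have key : φ * ∑ i ∈ Finset.Icc 1 (ℓ - 1), (z i) ^ 2 =
      ∑ i ∈ Finset.Icc 1 (ℓ - 1), z i * z (i + 1) := by
    have h1 := hols
    rw [hsplit (fun i => (z i) ^ 2), hsplit (fun i => z i * z (i + 1)),
      Finset.sum_congr rfl htail] at h1
    rw [mul_add, Finset.mul_sum, Finset.mul_sum] at h1
    rw [Finset.mul_sum]
    linarith [h1]
  constructor
  · field_simp
    linarith [key]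
  · intro i hi hin
    induction i, hi using Nat.le_induction with
    | base => simp
    | succ i hi ih =>
      have hin' : i ≤ n - 1 := by omega
      rw [hrec i hi hin', ih (by omega)]
      rw [show i + 1 - ℓ = (i - ℓ) + 1 by omega]
      ring
end

section
/- (Incremental update of a_{ij}.) For all integers i, j with 1 ≤ i < j ≤ p: Σ_{l=p+1−i}^{n−i} (z' l) · (z' (l−j+i)) = Σ_{l=p+1−i}^{n−i} (z l) · (z (l−j+i)) + (z' r − z r) · c, where c = 0 if r < p+1−j or r > n−i; c = z (r+j−i) if p+1−j ≤ r < p+1−i; c = z (r−j+i) if n−j < r ≤ n−i; and c = z (r+j−i) + z (r−j+i) if p+1−i ≤ r ≤ n−j. -/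
/-!
Changing `z` at the single point `r` only affects the products `z l * z (l - d)`, `d = j - i ≠ 0`,
with `l = r` or `l = r + d`; each of them changes by `(z' r - z r)` times its unchanged partner
factor. The constant `c` just records which of `r` and `r + d` lie in the summation window, and
`2p ≤ n` makes the window and its shift by `d` overlap, so that the four cases are exhaustive.
-/

open Finset

section ShiftedProduct

variable {G R : Type*} [AddCommGroup G] [DecidableEq G] [CommRing R]

theorem mul_shift_sub_of_eq_off {z z' : G → R} {r d : G} (hd : d ≠ 0)
    (hagree : ∀ l, l ≠ r → z' l = z l) (l : G) :
    z' l * z' (l - d) - z l * z (l - d) =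
      (if l = r then (z' r - z r) * z (r - d) else 0) +
        (if l = r + d then (z' r - z r) * z (r + d) else 0) := by
  by_cases hlr : l = r
  · subst hlr
    rw [if_pos rfl, if_neg (by simpa using hd), hagree (l - d) (by simpa using hd)]
    ring
  by_cases hlrd : l = r + d
  · subst hlrd
    rw [if_neg hlr, if_pos rfl, add_sub_cancel_right, hagree _ hlr]
    ring
  rw [if_neg hlr, if_neg hlrd, hagree l hlr, hagree (l - d) fun h => hlrd (by rw [← h]; abel)]
  ring

theorem sum_mul_shift_of_eq_off {z z' : G → R} {r d : G} (hd : d ≠ 0)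
    (hagree : ∀ l, l ≠ r → z' l = z l) (S : Finset G) :
    ∑ l ∈ S, z' l * z' (l - d) =
      ∑ l ∈ S, z l * z (l - d) +
        (z' r - z r) * ((if r ∈ S then z (r - d) else 0) + if r + d ∈ S then z (r + d) else 0) := by
  rw [← sub_eq_iff_eq_add', ← sum_sub_distrib,
    sum_congr rfl fun l _ => mul_shift_sub_of_eq_off hd hagree l, sum_add_distrib, sum_ite_eq', sum_ite_eq', mul_add, mul_ite, mul_ite, mul_zero]

end ShiftedProduct

theorem ite_mem_Icc_add_ite_mem_Icc {R : Type*} [AddCommMonoid R] {a b d r : ℤ} (hd : 0 < d)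
    (hab : a ≤ b - d + 1) (u v : R) :
    ((if r ∈ Icc a b then u else 0) + if r + d ∈ Icc a b then v else 0) =
      if r < a - d then 0
      else if r < a then v
      else if r ≤ b - d then v + u
      else if r ≤ b then u
      else 0 := by
  simp only [mem_Icc]
  split_ifs <;> first | omega | simp [add_comm]

theorem incremental_update_aij_general
    (p n : ℤ) (hn : 2 * p ≤ n)
    (z z' : ℤ → ℝ) (r : ℤ)
    (hagree : ∀ l : ℤ, l ≠ r → z' l = z l) :
    ∀ i j : ℤ, 1 ≤ i → i < j → j ≤ p →
      ∑ l ∈ Finset.Icc (p + 1 - i) (n - i), z' l * z' (l - j + i) =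
        (∑ l ∈ Finset.Icc (p + 1 - i) (n - i), z l * z (l - j + i)) +
          (z' r - z r) *
            (if r < p + 1 - j then 0
             else if r < p + 1 - i then z (r + j - i)
             else if r ≤ n - j then z (r + j - i) + z (r - j + i)
             else if r ≤ n - i then z (r - j + i)
             else 0) := by
  intro i j hi hij hjp
  have hshift : ∀ l, l - j + i = l - (j - i) := fun l => by ring
  have hr_shift : r + j - i = r + (j - i) := by ring
  have hlow : p + 1 - j = p + 1 - i - (j - i) := by ring
  have hhigh : n - j = n - i - (j - i) := by ring
  simp only [hshift, hr_shift, hlow, hhigh]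
  rw [sum_mul_shift_of_eq_off (sub_ne_zero.mpr hij.ne') hagree,
    ite_mem_Icc_add_ite_mem_Icc (sub_pos.mpr hij) (by omega)]

/-- Incremental update of `a_{ij}` (`i < j`): if `z'` differs from `z` only at
the single index `r` (with `1 ≤ r ≤ n`), then
`Σ_{l=p+1−i}^{n−i} z' l · z' (l−j+i) = Σ_{l=p+1−i}^{n−i} z l · z (l−j+i) + (z' r − z r) · c`,
where `c = 0` if `r < p+1−j` or `r > n−i`; `c = z (r+j−i)` if `p+1−j ≤ r < p+1−i`;
`c = z (r−j+i)` if `n−j < r ≤ n−i`; and `c = z (r+j−i) + z (r−j+i)` if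
`p+1−i ≤ r ≤ n−j`. -/
theorem incremental_update_aij
    (p n : ℤ) (hp : 1 ≤ p) (hn : 2 * p ≤ n)
    (z z' : ℤ → ℝ) (r : ℤ) (hr1 : 1 ≤ r) (hrn : r ≤ n)
    (hagree : ∀ l : ℤ, l ≠ r → z' l = z l) :
    ∀ i j : ℤ, 1 ≤ i → i < j → j ≤ p →
      ∑ l ∈ Finset.Icc (p + 1 - i) (n - i), z' l * z' (l - j + i) =
        (∑ l ∈ Finset.Icc (p + 1 - i) (n - i), z l * z (l - j + i)) +
          (z' r - z r) *
            (if r < p + 1 - j then 0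
             else if r < p + 1 - i then z (r + j - i)
             else if r ≤ n - j then z (r + j - i) + z (r - j + i)
             else if r ≤ n - i then z (r - j + i)
             else 0) :=
  incremental_update_aij_general p n hn z z' r hagree
end

section
/- (Incremental update of b_i.) For every integer i with 1 ≤ i ≤ p: Σ_{l=p+1}^{n} (z' l) · (z' (l−i)) = Σ_{l=p+1}^{n} (z l) · (z (l−i)) + (z' r − z r) · c, where c = 0 if r < p+1−i; c = z (r+i) if p+1−i ≤ r < p+1; c = z (r−i) if r > n−i; and c = z (r+i) + z (r−i) if p+1 ≤ r ≤ n−i. -/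
/-- Incremental update of `b_i`: if `z'` differs from `z` only at the single
index `r` (with `1 ≤ r ≤ n`), then for every `1 ≤ i ≤ p`,
`Σ_{l=p+1}^{n} z' l · z' (l−i) = Σ_{l=p+1}^{n} z l · z (l−i) + (z' r − z r) · c`,
where `c = 0` if `r < p+1−i`; `c = z (r+i)` if `p+1−i ≤ r < p+1`;
`c = z (r−i)` if `r > n−i`; and `c = z (r+i) + z (r−i)` if `p+1 ≤ r ≤ n−i`. -/
theorem incremental_update_bi
    (p n : ℤ) (hp : 1 ≤ p) (hn : 2 * p ≤ n)
    (z z' : ℤ → ℝ) (r : ℤ) (hr1 : 1 ≤ r) (hrn : r ≤ n)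
    (hagree : ∀ l : ℤ, l ≠ r → z' l = z l) :
    ∀ i : ℤ, 1 ≤ i → i ≤ p →
      ∑ l ∈ Finset.Icc (p + 1) n, z' l * z' (l - i) =
        (∑ l ∈ Finset.Icc (p + 1) n, z l * z (l - i)) +
          (z' r - z r) *
            (if r < p + 1 - i then 0
             else if r < p + 1 then z (r + i)
             else if n - i < r then z (r - i)
             else z (r + i) + z (r - i)) := by
  intro i hi1 hip
  have key : ∀ l ∈ Finset.Icc (p + 1) n,
      z' l * z' (l - i) = z l * z (l - i)
        + ((if l = r then (z' r - z r) * z (l - i) else 0)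
        + (if l = r + i then z l * (z' r - z r) else 0)) := by
    intro l _
    by_cases h1 : l = r
    · subst h1
      rw [if_pos rfl, if_neg (by omega), hagree (l - i) (by omega)]
      ring
    · rw [if_neg h1, hagree l h1]
      by_cases h2 : l = r + i
      · subst h2
        rw [if_pos rfl]
        have h3 : r + i - i = r := by ring
        rw [h3]
        ring
      · rw [if_neg h2, hagree (l - i) (by omega)]
        ring
  rw [Finset.sum_congr rfl key, Finset.sum_add_distrib, Finset.sum_add_distrib,
      Finset.sum_ite_eq', Finset.sum_ite_eq']
  have h3 : r + i - i = r := by ring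
  simp only [Finset.mem_Icc, h3]
  split_ifs
  all_goals (try (exfalso; omega))
  all_goals ring
end
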